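/- Let β > 0 and δ ≥ 1 with βδ ≥ 2, and assume (ln m_ξ)'' = O(ξ^{−β}) as ξ → ∞. Then there is a constant C such that for all pairs of nonnegative integers (j,k) with |j−k|^δ < (j+k)/2 one has |ρ_{j,k} − 1| ≤ C (j−k)² / (j+k)^β. -/

import Mathlib

/-!
With `f = log m`, `s = j + k` and `h = j - k`, one has
`log ρ_{j,k} = -(f(s + h) + f(s - h) - 2 f(s)) / 2`, a second difference of `f`, so
`|log ρ_{j,k}| ≤ h² sup |f''|` over `[s - |h|, s + |h|]`. As `|h| ≤ |h|^δ < s/2`, this interval lies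
in `[s/2, ∞)`, where `|f''| ≤ K (s/2)^(-β)` once `s` is large; and `βδ ≥ 2` turns `|h|^δ < s/2` into
`h² ≤ (s/2)^β`. Hence `log ρ_{j,k}` stays bounded and `|ρ - 1| ≤ |log ρ| e^|log ρ|` gives the claim.
For the finitely many small `s`, Cauchy–Schwarz gives `0 ≤ ρ ≤ 1`, while `h² ≥ 1` off the diagonal.
Differentiating `m` under the integral sign is justified by `|log r|^n ≤ n! ε^(-n) (r^ε + r^(-ε))`.
-/

open MeasureTheory Filter Complex Asymptotics Topology

noncomputable section

/-- The moment function `m_ξ = ∫_0^∞ r^ξ dμ(r)`. -/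
def mom (μ : Measure ℝ) (ξ : ℝ) : ℝ := ∫ r in Set.Ioi (0:ℝ), r ^ ξ ∂μ

/-- `ρ_{j,k} = m_{j+k} / (m_{2j} m_{2k})^{1/2}`. -/
def rho (μ : Measure ℝ) (j k : ℕ) : ℝ :=
  mom μ ((j : ℝ) + (k : ℝ)) / Real.sqrt (mom μ (2 * (j : ℝ)) * mom μ (2 * (k : ℝ)))

open Real Set

open scoped Nat

lemma abs_log_pow_le (n : ℕ) {ε r : ℝ} (hε : 0 < ε) (hr : 0 < r) :
    |Real.log r| ^ n ≤ n ! / ε ^ n * (r ^ ε + r ^ (-ε)) := by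
  have hexp : Real.exp (ε * |Real.log r|) ≤ r ^ ε + r ^ (-ε) := by
    rw [rpow_def_of_pos hr, rpow_def_of_pos hr]
    rcases le_total 0 (Real.log r) with h | h
    · rw [abs_of_nonneg h, mul_comm]
      linarith [exp_pos (Real.log r * -ε)]
    · rw [abs_of_nonpos h, mul_neg, ← neg_mul, mul_comm]
      linarith [exp_pos (Real.log r * ε)]
  calc |Real.log r| ^ n = (ε * |Real.log r|) ^ n / n ! * (n ! / ε ^ n) := by
        field_simp; ring
    _ ≤ Real.exp (ε * |Real.log r|) * (n ! / ε ^ n) := by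
        gcongr; exact Real.pow_div_factorial_le_exp _ (by positivity) n
    _ ≤ (r ^ ε + r ^ (-ε)) * (n ! / ε ^ n) := by gcongr
    _ = n ! / ε ^ n * (r ^ ε + r ^ (-ε)) := mul_comm _ _

lemma rpow_le_rpow_add_rpow {r c t d : ℝ} (hr : 0 < r) (hc : c ≤ t) (hd : t ≤ d) :
    r ^ t ≤ r ^ c + r ^ d := by
  rcases le_total r 1 with h | h
  · linarith [rpow_le_rpow_of_exponent_ge hr h hc, rpow_nonneg hr.le d]
  · linarith [rpow_le_rpow_of_exponent_le h hd, rpow_nonneg hr.le c]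

lemma rpow_mul_abs_log_pow_le (n : ℕ) {a b t r : ℝ} (ha : 0 < a) (hat : a ≤ t) (htb : t ≤ b)
    (hr : 0 < r) :
    r ^ t * |Real.log r| ^ n ≤ 2 * n ! / (a / 2) ^ n * (r ^ (a / 2) + r ^ (b + a / 2)) := by
  have hplus : r ^ (t + a / 2) ≤ r ^ (a / 2) + r ^ (b + a / 2) :=
    rpow_le_rpow_add_rpow hr (by linarith) (by linarith)
  have hminus : r ^ (t - a / 2) ≤ r ^ (a / 2) + r ^ (b + a / 2) :=
    rpow_le_rpow_add_rpow hr (by linarith) (by linarith)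
  calc r ^ t * |Real.log r| ^ n
      ≤ r ^ t * (n ! / (a / 2) ^ n * (r ^ (a / 2) + r ^ (-(a / 2)))) := by
        gcongr; exact abs_log_pow_le n (by positivity) hr
    _ = n ! / (a / 2) ^ n * (r ^ (t + a / 2) + r ^ (t - a / 2)) := by
        rw [rpow_add hr, rpow_sub hr, rpow_neg hr.le]; ring
    _ ≤ n ! / (a / 2) ^ n
          * ((r ^ (a / 2) + r ^ (b + a / 2)) + (r ^ (a / 2) + r ^ (b + a / 2))) := by
        gcongr
    _ = 2 * n ! / (a / 2) ^ n * (r ^ (a / 2) + r ^ (b + a / 2)) := by ring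

lemma abs_exp_sub_one_le_mul_exp_abs (x : ℝ) : |Real.exp x - 1| ≤ |x| * Real.exp |x| := by
  have h := (convex_uIcc (0 : ℝ) x).norm_image_sub_le_of_norm_hasDerivWithin_le
    (C := Real.exp |x|) (fun y _ => (Real.hasDerivAt_exp y).hasDerivWithinAt) (fun y hy => ?_)
    left_mem_uIcc right_mem_uIcc
  · rwa [Real.exp_zero, sub_zero, Real.norm_eq_abs, Real.norm_eq_abs, mul_comm] at h
  · have hy' := abs_sub_left_of_mem_uIcc hy
    rw [sub_zero, sub_zero] at hy'
    rw [Real.norm_eq_abs, abs_of_pos (Real.exp_pos y)]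
    exact Real.exp_le_exp.mpr ((le_abs_self y).trans hy')

lemma abs_add_sub_two_mul_le {f f' f'' : ℝ → ℝ} {s h M : ℝ}
    (hf : ∀ x ∈ Metric.closedBall s |h|, HasDerivAt f (f' x) x)
    (hf' : ∀ x ∈ Metric.closedBall s |h|, HasDerivAt f' (f'' x) x)
    (hM : ∀ x ∈ Metric.closedBall s |h|, |f'' x| ≤ M) :
    |f (s + h) + f (s - h) - 2 * f s| ≤ 2 * M * h ^ 2 := by
  have hmem : ∀ u ∈ uIcc 0 h,
      s + u ∈ Metric.closedBall s |h| ∧ s - u ∈ Metric.closedBall s |h| := by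
    intro u hu
    have hu' := abs_sub_left_of_mem_uIcc hu
    rw [sub_zero, sub_zero] at hu'
    simp only [Metric.mem_closedBall, Real.dist_eq, add_sub_cancel_left, sub_sub_cancel_left,
      abs_neg]
    exact ⟨hu', hu'⟩
  have hslope : ∀ u ∈ uIcc 0 h, ‖f' (s + u) - f' (s - u)‖ ≤ 2 * M * |h| := by
    intro u hu
    have hu' := abs_sub_left_of_mem_uIcc hu
    rw [sub_zero, sub_zero] at hu'
    have hM0 : 0 ≤ M := (abs_nonneg _).trans (hM s (Metric.mem_closedBall_self (abs_nonneg h)))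
    calc ‖f' (s + u) - f' (s - u)‖ ≤ M * ‖(s + u) - (s - u)‖ :=
          (convex_closedBall s |h|).norm_image_sub_le_of_norm_hasDerivWithin_le
            (fun x hx => (hf' x hx).hasDerivWithinAt) hM (hmem u hu).2 (hmem u hu).1
      _ = 2 * M * |u| := by
          rw [Real.norm_eq_abs, add_sub_sub_cancel, ← two_mul, abs_mul, abs_two]; ring
      _ ≤ 2 * M * |h| := by gcongr
  have hg : ∀ u ∈ uIcc 0 h, HasDerivWithinAt (fun u => f (s + u) + f (s - u))
      (f' (s + u) - f' (s - u)) (uIcc 0 h) u := fun u hu =>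
    (((hf _ (hmem u hu).1).comp_const_add s u).add
      ((hf _ (hmem u hu).2).comp_const_sub s u)).hasDerivWithinAt
  have hdiff := (convex_uIcc 0 h).norm_image_sub_le_of_norm_hasDerivWithin_le hg hslope
    left_mem_uIcc right_mem_uIcc
  rw [add_zero, sub_zero, sub_zero, ← two_mul, Real.norm_eq_abs, Real.norm_eq_abs] at hdiff
  calc |f (s + h) + f (s - h) - 2 * f s| ≤ 2 * M * |h| * |h| := hdiff
    _ = 2 * M * h ^ 2 := by rw [mul_assoc, ← sq, sq_abs]

lemma sq_le_rpow_of_abs_rpow_le {β δ h x : ℝ} (hδ : 0 < δ) (hβδ : 2 ≤ β * δ) (hx : 1 ≤ x)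
    (hh : |h| ^ δ ≤ x) : h ^ 2 ≤ x ^ β := by
  have hsq : h ^ 2 = (|h| ^ δ) ^ (2 / δ) := by
    rw [← rpow_mul (abs_nonneg h), mul_div_cancel₀ _ hδ.ne', rpow_two, sq_abs]
  calc h ^ 2 = (|h| ^ δ) ^ (2 / δ) := hsq
    _ ≤ x ^ (2 / δ) := rpow_le_rpow (by positivity) hh (by positivity)
    _ ≤ x ^ β := rpow_le_rpow_of_exponent_le hx ((div_le_iff₀ hδ).mpr hβδ)

lemma abs_add_sub_two_mul_le_of_abs_deriv2_le_rpow {f : ℝ → ℝ} {K β s h : ℝ} (hβ : 0 ≤ β)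
    (hs : 0 < s) (hh : |h| ≤ s / 2)
    (hf : ∀ x, s / 2 ≤ x → DifferentiableAt ℝ f x)
    (hf' : ∀ x, s / 2 ≤ x → DifferentiableAt ℝ (deriv f) x)
    (hK : ∀ x, s / 2 ≤ x → |deriv (deriv f) x| ≤ K * x ^ (-β)) :
    |f (s + h) + f (s - h) - 2 * f s| ≤ 2 * (K * (s / 2) ^ (-β)) * h ^ 2 := by
  have hball : ∀ x ∈ Metric.closedBall s |h|, s / 2 ≤ x := fun x hx => by
    rw [Metric.mem_closedBall, Real.dist_eq, abs_le] at hx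
    linarith [hx.1]
  have hK0 : 0 ≤ K := nonneg_of_mul_nonneg_left ((abs_nonneg _).trans (hK _ le_rfl))
    (rpow_pos_of_pos (half_pos hs) _)
  refine abs_add_sub_two_mul_le (fun x hx => (hf x (hball x hx)).hasDerivAt)
    (fun x hx => (hf' x (hball x hx)).hasDerivAt) fun x hx => (hK x (hball x hx)).trans ?_
  exact mul_le_mul_of_nonneg_left
    (rpow_le_rpow_of_nonpos (half_pos hs) (hball x hx) (neg_nonpos.mpr hβ)) hK0

def HasMoments (μ : Measure ℝ) : Prop :=
  ∀ ξ : ℝ, 0 ≤ ξ → IntegrableOn (fun r : ℝ => r ^ ξ) (Ioi 0) μ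

def momLog (μ : Measure ℝ) (n : ℕ) (t : ℝ) : ℝ :=
  ∫ r in Ioi (0:ℝ), r ^ t * Real.log r ^ n ∂μ

lemma mom_eq_momLog_zero (μ : Measure ℝ) : mom μ = momLog μ 0 := by
  funext t; simp [mom, momLog]

lemma aestronglyMeasurable_rpow_mul_log_pow (ν : Measure ℝ) (n : ℕ) (t : ℝ) :
    AEStronglyMeasurable (fun r : ℝ => r ^ t * Real.log r ^ n) ν := by
  fun_prop

variable {μ : Measure ℝ}

lemma HasMoments.integrableOn_rpow_add_rpow (hmom : HasMoments μ) (C : ℝ) {a b : ℝ}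
    (ha : 0 ≤ a) (hb : 0 ≤ b) :
    IntegrableOn (fun r : ℝ => C * (r ^ a + r ^ b)) (Ioi 0) μ :=
  ((hmom a ha).add (hmom b hb)).const_mul C

lemma HasMoments.integrableOn_rpow_mul_log_pow (hmom : HasMoments μ) (n : ℕ) {t : ℝ}
    (ht : 0 < t) : IntegrableOn (fun r : ℝ => r ^ t * Real.log r ^ n) (Ioi 0) μ := by
  refine Integrable.mono
    (hmom.integrableOn_rpow_add_rpow (2 * n ! / (t / 2) ^ n) (a := t / 2) (b := t + t / 2)
      (by positivity) (by positivity))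
    (aestronglyMeasurable_rpow_mul_log_pow _ n t) ?_
  filter_upwards [ae_restrict_mem measurableSet_Ioi] with r (hr : 0 < r)
  rw [Real.norm_eq_abs, Real.norm_eq_abs, abs_mul, abs_pow, abs_of_pos (rpow_pos_of_pos hr t)]
  exact (rpow_mul_abs_log_pow_le n ht le_rfl le_rfl hr).trans (le_abs_self _)

lemma HasMoments.hasDerivAt_momLog (hmom : HasMoments μ) (n : ℕ) {ξ : ℝ} (hξ : 0 < ξ) :
    HasDerivAt (momLog μ n) (momLog μ (n + 1) ξ) ξ := by
  have hball : ∀ t ∈ Metric.ball ξ (ξ / 2), ξ / 2 ≤ t ∧ t ≤ 3 * ξ / 2 := by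
    intro t ht
    rw [Metric.mem_ball, Real.dist_eq, abs_lt] at ht
    constructor <;> linarith
  refine (hasDerivAt_integral_of_dominated_loc_of_deriv_le
    (F' := fun t r => r ^ t * Real.log r ^ (n + 1))
    (Metric.ball_mem_nhds ξ (by positivity : 0 < ξ / 2))
    (Eventually.of_forall fun t => aestronglyMeasurable_rpow_mul_log_pow _ n t)
    (hmom.integrableOn_rpow_mul_log_pow n hξ)
    (aestronglyMeasurable_rpow_mul_log_pow _ (n + 1) ξ) ?_
    (hmom.integrableOn_rpow_add_rpow (2 * (n + 1)! / (ξ / 2 / 2) ^ (n + 1))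
      (a := ξ / 2 / 2) (b := 3 * ξ / 2 + ξ / 2 / 2) (by positivity) (by positivity)) ?_).2
  · filter_upwards [ae_restrict_mem measurableSet_Ioi] with r (hr : 0 < r) t ht
    obtain ⟨hlo, hhi⟩ := hball t ht
    rw [Real.norm_eq_abs, abs_mul, abs_pow, abs_of_pos (rpow_pos_of_pos hr t)]
    exact rpow_mul_abs_log_pow_le (n + 1) (by positivity) hlo hhi hr
  · filter_upwards [ae_restrict_mem measurableSet_Ioi] with r (hr : 0 < r) t _
    refine ((hasStrictDerivAt_const_rpow hr t).hasDerivAt.mul_const (Real.log r ^ n)).congr_deriv ?_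
    ring

lemma mom_pos (hpos : μ (Ioi 0) ≠ 0) (hmom : HasMoments μ) {ξ : ℝ} (hξ : 0 ≤ ξ) :
    0 < mom μ ξ := by
  rw [mom, setIntegral_pos_iff_support_of_nonneg_ae _ (hmom ξ hξ)]
  · refine hpos.bot_lt.trans_le (measure_mono fun r (hr : 0 < r) => ⟨?_, hr⟩)
    exact (rpow_pos_of_pos hr ξ).ne'
  · filter_upwards [ae_restrict_mem measurableSet_Ioi] with r (hr : 0 < r)
    exact rpow_nonneg hr.le ξ

lemma hasDerivAt_log_mom (hpos : μ (Ioi 0) ≠ 0) (hmom : HasMoments μ) {ξ : ℝ} (hξ : 0 < ξ) :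
    HasDerivAt (fun t => Real.log (mom μ t)) (momLog μ 1 ξ / momLog μ 0 ξ) ξ := by
  have hm := mom_pos hpos hmom hξ.le
  rw [mom_eq_momLog_zero] at hm ⊢
  exact (hmom.hasDerivAt_momLog 0 hξ).log hm.ne'

lemma differentiableAt_deriv_log_mom (hpos : μ (Ioi 0) ≠ 0) (hmom : HasMoments μ) {ξ : ℝ}
    (hξ : 0 < ξ) : DifferentiableAt ℝ (deriv fun t => Real.log (mom μ t)) ξ := by
  have heq : deriv (fun t => Real.log (mom μ t)) =ᶠ[𝓝 ξ]
      fun t => momLog μ 1 t / momLog μ 0 t := by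
    filter_upwards [Ioi_mem_nhds hξ] with t ht using (hasDerivAt_log_mom hpos hmom ht).deriv
  have hm := mom_pos hpos hmom hξ.le
  rw [mom_eq_momLog_zero] at hm
  exact ((hmom.hasDerivAt_momLog 1 hξ).div (hmom.hasDerivAt_momLog 0 hξ)
    hm.ne').differentiableAt.congr_of_eventuallyEq heq

lemma HasMoments.mom_add_le_sqrt (hmom : HasMoments μ) {a b : ℝ} (ha : 0 ≤ a) (hb : 0 ≤ b) :
    mom μ (a + b) ≤ √(mom μ (2 * a) * mom μ (2 * b)) := by
  have hnonneg : ∀ c : ℝ, 0 ≤ᵐ[μ.restrict (Ioi 0)] fun r : ℝ => r ^ c := fun c => by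
    filter_upwards [ae_restrict_mem measurableSet_Ioi] with r (hr : 0 < r)
    exact rpow_nonneg hr.le c
  have hsq : ∀ c : ℝ, EqOn (fun r : ℝ => (r ^ c) ^ (2:ℝ)) (fun r => r ^ (2 * c)) (Ioi 0) :=
    fun c r (hr : 0 < r) => by simp only [← rpow_mul hr.le, mul_comm]
  have hL2 : ∀ c : ℝ, 0 ≤ c →
      MemLp (fun r : ℝ => r ^ c) (ENNReal.ofReal 2) (μ.restrict (Ioi 0)) := by
    intro c hc
    rw [ENNReal.ofReal_ofNat, memLp_two_iff_integrable_sq (by fun_prop)]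
    refine (hmom (2 * c) (by positivity)).congr_fun (fun r hr => ?_) measurableSet_Ioi
    rw [← hsq c hr]
    exact rpow_two _
  have h := integral_mul_le_Lp_mul_Lq_of_nonneg Real.HolderConjugate.two_two (hnonneg a)
    (hnonneg b) (hL2 a ha) (hL2 b hb)
  rw [setIntegral_congr_fun measurableSet_Ioi (hsq a),
    setIntegral_congr_fun measurableSet_Ioi (hsq b),
    setIntegral_congr_fun measurableSet_Ioi fun r (hr : 0 < r) => (rpow_add hr a b).symm,
    ← sqrt_eq_rpow, ← sqrt_eq_rpow] at h
  rwa [mom, mom, mom, sqrt_mul (integral_nonneg_of_ae (hnonneg (2 * a)))]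

lemma rho_le_one (hmom : HasMoments μ) (j k : ℕ) : rho μ j k ≤ 1 := by
  rw [rho]
  rcases (sqrt_nonneg (mom μ (2 * j) * mom μ (2 * k))).eq_or_lt with h | h
  · rw [← h, div_zero]; exact zero_le_one
  · rw [div_le_one h]
    exact hmom.mom_add_le_sqrt (Nat.cast_nonneg j) (Nat.cast_nonneg k)

lemma abs_rho_sub_one_le_one (hmom : HasMoments μ) (j k : ℕ) : |rho μ j k - 1| ≤ 1 := by
  have hnonneg : 0 ≤ rho μ j k :=
    div_nonneg (setIntegral_nonneg measurableSet_Ioi fun r (hr : 0 < r) => rpow_nonneg hr.le _)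
      (sqrt_nonneg _)
  rw [abs_le]
  constructor <;> linarith [rho_le_one hmom j k]

lemma rho_self (hpos : μ (Ioi 0) ≠ 0) (hmom : HasMoments μ) (k : ℕ) : rho μ k k = 1 := by
  rw [rho, ← two_mul, sqrt_mul_self (mom_pos hpos hmom (by positivity)).le,
    div_self (mom_pos hpos hmom (by positivity)).ne']

lemma rho_eq_exp (hpos : μ (Ioi 0) ≠ 0) (hmom : HasMoments μ) (j k : ℕ) :
    rho μ j k = Real.exp (Real.log (mom μ (j + k))
      - (Real.log (mom μ (2 * j)) + Real.log (mom μ (2 * k))) / 2) := by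
  rw [Real.exp_sub, Real.exp_half, Real.exp_add, Real.exp_log (mom_pos hpos hmom (by positivity)),
    Real.exp_log (mom_pos hpos hmom (by positivity)),
    Real.exp_log (mom_pos hpos hmom (by positivity)), rho]

lemma abs_rho_sub_one_le (hpos : μ (Ioi 0) ≠ 0) (hmom : HasMoments μ) {K β : ℝ} (hβ : 0 ≤ β)
    {j k : ℕ} (hs : 0 < (j + k : ℝ)) (hh : |(j - k : ℝ)| ≤ (j + k) / 2)
    (hhβ : (j - k : ℝ) ^ 2 ≤ ((j + k) / 2) ^ β)
    (hK : ∀ x, (j + k : ℝ) / 2 ≤ x →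
      |deriv (deriv fun t => Real.log (mom μ t)) x| ≤ K * x ^ (-β)) :
    |rho μ j k - 1| ≤ K * Real.exp K * 2 ^ β * (j - k : ℝ) ^ 2 / (j + k) ^ β := by
  set s : ℝ := j + k
  set h : ℝ := j - k
  have hpos' : ∀ x, s / 2 ≤ x → 0 < x := fun x hx => (half_pos hs).trans_le hx
  have hD := abs_add_sub_two_mul_le_of_abs_deriv2_le_rpow hβ hs hh
    (fun x hx => (hasDerivAt_log_mom hpos hmom (hpos' x hx)).differentiableAt)
    (fun x hx => differentiableAt_deriv_log_mom hpos hmom (hpos' x hx)) hK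
  have hK0 : 0 ≤ K := nonneg_of_mul_nonneg_left ((abs_nonneg _).trans (hK _ le_rfl))
    (rpow_pos_of_pos (half_pos hs) _)
  have hsβ : (s / 2) ^ (-β) = 2 ^ β / s ^ β := by
    rw [rpow_neg (half_pos hs).le, div_rpow hs.le zero_le_two, inv_div]
  set x := Real.log (mom μ s) - (Real.log (mom μ (s + h)) + Real.log (mom μ (s - h))) / 2
  have hx : |x| ≤ K * (s / 2) ^ (-β) * h ^ 2 := by
    have : x = -((Real.log (mom μ (s + h)) + Real.log (mom μ (s - h))
      - 2 * Real.log (mom μ s)) / 2) := by ring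
    rw [this, abs_neg, abs_div, abs_two]
    linarith
  have hxK : |x| ≤ K := by
    have hfrac : (s / 2) ^ (-β) * h ^ 2 ≤ 1 := by
      rwa [rpow_neg (half_pos hs).le, inv_mul_le_iff₀ (rpow_pos_of_pos (half_pos hs) β), mul_one]
    calc |x| ≤ K * ((s / 2) ^ (-β) * h ^ 2) := by rwa [← mul_assoc]
      _ ≤ K := mul_le_of_le_one_right hK0 hfrac
  have hrho : rho μ j k = Real.exp x := by
    rw [rho_eq_exp hpos hmom, show (2 * j : ℝ) = s + h by ring, show (2 * k : ℝ) = s - h by ring]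
  calc |rho μ j k - 1| = |Real.exp x - 1| := by rw [hrho]
    _ ≤ |x| * Real.exp |x| := abs_exp_sub_one_le_mul_exp_abs x
    _ ≤ K * (s / 2) ^ (-β) * h ^ 2 * Real.exp K := by gcongr
    _ = K * Real.exp K * 2 ^ β * h ^ 2 / s ^ β := by rw [hsβ]; ring

theorem rho_near_diagonal_general
    (μ : Measure ℝ)
    (hpos : μ (Set.Ioi (0:ℝ)) ≠ 0)
    (hmom : ∀ ξ : ℝ, 0 ≤ ξ → IntegrableOn (fun r : ℝ => r ^ ξ) (Set.Ioi (0:ℝ)) μ)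
    (β δ : ℝ) (hδ : 1 ≤ δ) (hβδ : 2 ≤ β * δ)
    (hO : (fun ξ => deriv (deriv fun t => Real.log (mom μ t)) ξ)
            =O[atTop] fun ξ : ℝ => ξ ^ (-β)) :
    ∃ C : ℝ, ∀ j k : ℕ, |(j:ℝ) - (k:ℝ)| ^ δ < ((j:ℝ) + (k:ℝ)) / 2 →
      |rho μ j k - 1| ≤ C * ((j:ℝ) - (k:ℝ))^2 / ((j:ℝ) + (k:ℝ)) ^ β := by
  have hδ0 : 0 < δ := zero_lt_one.trans_le hδ
  have hβ : 0 < β := pos_of_mul_pos_left (two_pos.trans_le hβδ) hδ0.le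
  obtain ⟨K, hK⟩ := hO.bound
  obtain ⟨R, hR⟩ := eventually_atTop.mp hK
  set S := max (2 * R) 2
  refine ⟨max (K * Real.exp K * 2 ^ β) (S ^ β), fun j k hjk => ?_⟩
  rcases eq_or_ne j k with rfl | hne
  · simp [rho_self hpos hmom]
  have h1 : 1 ≤ |(j - k : ℝ)| := by
    have h1ℤ : 1 ≤ |(j - k : ℤ)| := Int.one_le_abs (sub_ne_zero.mpr (by exact_mod_cast hne))
    exact_mod_cast h1ℤ
  have hh : |(j - k : ℝ)| ≤ (j + k) / 2 := (self_le_rpow_of_one_le h1 hδ).trans hjk.le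
  have hs : 0 < (j + k : ℝ) := by linarith
  rcases lt_or_ge ((j:ℝ) + k) S with hsmall | hlarge
  · calc |rho μ j k - 1| ≤ 1 := abs_rho_sub_one_le_one hmom j k
      _ ≤ S ^ β * (j - k : ℝ) ^ 2 / (j + k) ^ β := by
          rw [le_div_iff₀ (by positivity), one_mul]
          exact (rpow_le_rpow hs.le hsmall.le hβ.le).trans
            (le_mul_of_one_le_right (by positivity) ((one_le_sq_iff_one_le_abs _).mpr h1))
      _ ≤ _ := by gcongr; exact le_max_right _ _
  · have hSR : 2 * R ≤ S := le_max_left _ _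
    have hS2 : 2 ≤ S := le_max_right _ _
    refine (abs_rho_sub_one_le (K := K) hpos hmom hβ.le hs hh
      (sq_le_rpow_of_abs_rpow_le hδ0 hβδ (by linarith) hjk.le) fun x hx => ?_).trans ?_
    · have hRx := hR x (by linarith)
      rwa [Real.norm_eq_abs, Real.norm_eq_abs, abs_of_pos (rpow_pos_of_pos (by linarith) _)] at hRx
    · gcongr; exact le_max_left _ _

/-- If `β > 0`, `δ ≥ 1`, `βδ ≥ 2` and `(ln m_ξ)'' = O(ξ^{−β})`, then there is a
constant `C` such that `|ρ_{j,k} − 1| ≤ C (j−k)²/(j+k)^β` for all `(j,k)` with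
`|j−k|^δ < (j+k)/2`. -/
theorem rho_near_diagonal
    (μ : Measure ℝ)
    (hsupp : μ (Set.Iic (0:ℝ)) = 0)
    (hpos : μ (Set.Ioi (0:ℝ)) ≠ 0)
    (hmom : ∀ ξ : ℝ, 0 ≤ ξ → IntegrableOn (fun r : ℝ => r ^ ξ) (Set.Ioi (0:ℝ)) μ)
    (β δ : ℝ) (hβ : 0 < β) (hδ : 1 ≤ δ) (hβδ : 2 ≤ β * δ)
    (hO : (fun ξ => deriv (deriv fun t => Real.log (mom μ t)) ξ)
            =O[atTop] fun ξ : ℝ => ξ ^ (-β)) :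
    ∃ C : ℝ, ∀ j k : ℕ, |(j:ℝ) - (k:ℝ)| ^ δ < ((j:ℝ) + (k:ℝ)) / 2 →
      |rho μ j k - 1| ≤ C * ((j:ℝ) - (k:ℝ))^2 / ((j:ℝ) + (k:ℝ)) ^ β :=
  rho_near_diagonal_general μ hpos hmom β δ hδ hβδ hO

end
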